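/- Assume b_X < 0 and a_X + b_X > 0, and assume either a_Y + b_Y < 0, or both a_Y + b_Y > 0 and a_Y > b_Y. Then T_X'(x) < 0 for every x ∈ (1/2, 1). -/

import Mathlib

/-!
Writing `y = qreY` and `D(x) = log (1/x - 1)`, the quotient rule together with
`D'(x) = -1 / (x (1 - x))` gives `T_X'(x) = (b_X - (a_X + b_X) L(x)) / (x (1 - x) D(x)²)`, so it
suffices that `L > 0` on `(1/2, 1)`. Since `y` is a logistic curve, `y' = c y (1 - y)` with
`c = (a_Y + b_Y) / T_y`, hence `L = y (1 + c x (1 - x) D (1 - y))`. On `(1/2, 1)` we have `D < 0`;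
if `c < 0` the bracket exceeds `1`. If `c > 0` and `a_Y > b_Y`, then `1 - y ≤ exp (-c (x - 1/2))`
and `x (1 - x) (-D) ≤ x - 1/2` (this is `t ≤ sinh t` at `t = -D`), so the subtracted term is at most
`u exp (-u) < 1` with `u = c (x - 1/2)`.
-/

open Real Filter Set Topology

/-- QRE response of the second player. -/
noncomputable def qreY (aY bY Ty : ℝ) (x : ℝ) : ℝ :=
  (1 + Real.exp ((bY - (aY + bY) * x) / Ty))⁻¹

/-- QRE temperature curve for the first player. -/
noncomputable def qreTX (aX bX aY bY Ty : ℝ) (x : ℝ) : ℝ :=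
  (bX - (aX + bX) * qreY aY bY Ty x) / Real.log (1 / x - 1)

/-- The auxiliary function L(x) = y(x) + x(1-x) ln(1/x-1) y'(x). -/
noncomputable def qreL (aY bY Ty : ℝ) (x : ℝ) : ℝ :=
  qreY aY bY Ty x + x * (1 - x) * Real.log (1 / x - 1) * deriv (qreY aY bY Ty) x

section Response

variable (aY bY Ty : ℝ)

lemma qreY_pos (x : ℝ) : 0 < qreY aY bY Ty x := by
  unfold qreY; positivity

lemma qreY_lt_one (x : ℝ) : qreY aY bY Ty x < 1 :=
  inv_lt_one_of_one_lt₀ (lt_add_of_pos_right 1 (exp_pos _))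

lemma hasDerivAt_qreY (x : ℝ) :
    HasDerivAt (qreY aY bY Ty)
      ((aY + bY) / Ty * qreY aY bY Ty x * (1 - qreY aY bY Ty x)) x := by
  have hexp : HasDerivAt (fun x : ℝ => 1 + exp ((bY - (aY + bY) * x) / Ty))
      (exp ((bY - (aY + bY) * x) / Ty) * (-(aY + bY) / Ty)) x := by
    have hlin : HasDerivAt (fun x : ℝ => (bY - (aY + bY) * x) / Ty) (-(aY + bY) / Ty) x := by
      simpa using (((hasDerivAt_id x).const_mul (aY + bY)).const_sub bY).div_const Ty
    exact hlin.exp.const_add 1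
  have hne : 1 + exp ((bY - (aY + bY) * x) / Ty) ≠ 0 := by positivity
  refine (hexp.inv hne).congr_deriv ?_
  unfold qreY
  field_simp
  ring

lemma qreL_eq (x : ℝ) :
    qreL aY bY Ty x = qreY aY bY Ty x *
      (1 + (aY + bY) / Ty * (x * (1 - x) * log (1 / x - 1)) * (1 - qreY aY bY Ty x)) := by
  rw [qreL, (hasDerivAt_qreY aY bY Ty x).deriv]
  ring

lemma one_sub_qreY_le_exp {Ty : ℝ} (hTy : 0 < Ty) (hab : bY ≤ aY) (x : ℝ) :
    1 - qreY aY bY Ty x ≤ exp (-((aY + bY) / Ty * (x - 1 / 2))) := by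
  set E := exp ((bY - (aY + bY) * x) / Ty)
  have hE : 0 < E := exp_pos _
  have hsub : 1 - qreY aY bY Ty x = E / (1 + E) := by
    unfold qreY; field_simp; ring
  calc 1 - qreY aY bY Ty x = E / (1 + E) := hsub
    _ ≤ E := div_le_self hE.le (by linarith)
    _ ≤ exp (-((aY + bY) / Ty * (x - 1 / 2))) := by
      refine exp_le_exp.mpr ?_
      rw [show -((aY + bY) / Ty * (x - 1 / 2)) = (-(aY + bY) * (x - 1 / 2)) / Ty by ring]
      exact div_le_div_of_nonneg_right (by linarith) hTy.le

end Response

lemma hasDerivAt_log_one_div_sub_one {x : ℝ} (hx₀ : x ≠ 0) (hx₁ : x ≠ 1) :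
    HasDerivAt (fun x : ℝ => log (1 / x - 1)) (-(1 / (x * (1 - x)))) x := by
  have h1x : 1 - x ≠ 0 := sub_ne_zero.mpr (Ne.symm hx₁)
  have hne : 1 / x - 1 ≠ 0 := by
    rw [div_sub_one hx₀]; exact div_ne_zero h1x hx₀
  have hinv : HasDerivAt (fun x : ℝ => 1 / x - 1) (-(x ^ 2)⁻¹) x := by
    simpa [one_div] using (hasDerivAt_inv hx₀).sub_const 1
  refine (hinv.log hne).congr_deriv ?_
  field_simp

lemma log_one_div_sub_one_neg {x : ℝ} (hx : 1 / 2 < x) (hx₁ : x < 1) : log (1 / x - 1) < 0 := by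
  have hx₀ : 0 < x := by linarith
  refine log_neg ?_ ?_
  · rw [div_sub_one hx₀.ne']; exact div_pos (by linarith) hx₀
  · rw [div_sub_one hx₀.ne', div_lt_one hx₀]; linarith

lemma neg_mul_log_one_div_sub_one_le {x : ℝ} (hx : 1 / 2 ≤ x) (hx₁ : x < 1) :
    -(x * (1 - x) * log (1 / x - 1)) ≤ x - 1 / 2 := by
  have hx₀ : 0 < x := by linarith
  have h1x : 0 < 1 - x := by linarith
  set s := x / (1 - x)
  have hs : 0 < s := div_pos hx₀ h1x
  have hlog : log (1 / x - 1) = -log s := by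
    rw [← log_inv, inv_div, div_sub_one hx₀.ne']
  have hsinh : log s ≤ (s - s⁻¹) / 2 := by
    rw [← sinh_log hs]
    exact self_le_sinh_iff.mpr (log_nonneg ((one_le_div h1x).mpr (by linarith)))
  calc -(x * (1 - x) * log (1 / x - 1)) = x * (1 - x) * log s := by rw [hlog]; ring
    _ ≤ x * (1 - x) * ((s - s⁻¹) / 2) := by gcongr
    _ = x - 1 / 2 := by simp only [s]; field_simp; ring

lemma mul_exp_neg_lt_one (u : ℝ) : u * exp (-u) < 1 :=
  (mul_exp_neg_le_exp_neg_one u).trans_lt (Real.exp_lt_one_iff.mpr (by norm_num))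

lemma qreL_pos (aY bY : ℝ) {Ty : ℝ} (hTy : 0 < Ty)
    (hY : aY + bY < 0 ∨ (aY + bY > 0 ∧ aY > bY)) {x : ℝ} (hx : x ∈ Ioo (1 / 2 : ℝ) 1) :
    0 < qreL aY bY Ty x := by
  obtain ⟨hx₀, hx₁⟩ := hx
  set c := (aY + bY) / Ty
  set y := qreY aY bY Ty x
  have hD := log_one_div_sub_one_neg hx₀ hx₁
  have hxx : 0 < x * (1 - x) := mul_pos (by linarith) (by linarith)
  have hy1 : 0 < 1 - y := sub_pos.mpr (qreY_lt_one aY bY Ty x)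
  rw [qreL_eq]
  refine mul_pos (qreY_pos aY bY Ty x) ?_
  rcases hY with hneg | ⟨hpos, hab⟩
  · have hc : c < 0 := div_neg_of_neg_of_pos hneg hTy
    have : 0 < c * (x * (1 - x) * log (1 / x - 1)) * (1 - y) :=
      mul_pos (mul_pos_of_neg_of_neg hc (mul_neg_of_pos_of_neg hxx hD)) hy1
    linarith
  · have hc : 0 < c := div_pos hpos hTy
    have hdecay : 1 - y ≤ exp (-(c * (x - 1 / 2))) := one_sub_qreY_le_exp aY bY hTy hab.le x
    have hlog := neg_mul_log_one_div_sub_one_le hx₀.le hx₁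
    have hbound : c * (-(x * (1 - x) * log (1 / x - 1))) * (1 - y)
        ≤ c * (x - 1 / 2) * exp (-(c * (x - 1 / 2))) := by
      have : 0 ≤ -(x * (1 - x) * log (1 / x - 1)) := by nlinarith
      gcongr
    linarith [mul_exp_neg_lt_one (c * (x - 1 / 2))]

lemma hasDerivAt_qreTX (aX bX aY bY Ty : ℝ) {x : ℝ} (hx₀ : x ≠ 0) (hx₁ : x ≠ 1)
    (hD : log (1 / x - 1) ≠ 0) :
    HasDerivAt (qreTX aX bX aY bY Ty)
      ((bX - (aX + bX) * qreL aY bY Ty x) / (x * (1 - x) * log (1 / x - 1) ^ 2)) x := by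
  have h1x : 1 - x ≠ 0 := sub_ne_zero.mpr (Ne.symm hx₁)
  have hnum : HasDerivAt (fun x => bX - (aX + bX) * qreY aY bY Ty x)
      (-((aX + bX) * deriv (qreY aY bY Ty) x)) x := by
    have hy := (hasDerivAt_qreY aY bY Ty x).differentiableAt.hasDerivAt
    simpa using (hy.const_mul (aX + bX)).const_sub bX
  refine (hnum.div (hasDerivAt_log_one_div_sub_one hx₀ hx₁) hD).congr_deriv ?_
  rw [qreL]
  field_simp
  ring

theorem stmt_18 (aX bX aY bY Ty : ℝ) (hTy : 0 < Ty)
    (hbX : bX < 0) (hsum : aX + bX > 0)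
    (hY : aY + bY < 0 ∨ (aY + bY > 0 ∧ aY > bY)) :
    ∀ x ∈ Set.Ioo (1/2 : ℝ) 1, deriv (qreTX aX bX aY bY Ty) x < 0 := by
  intro x hx
  have hD := log_one_div_sub_one_neg hx.1 hx.2
  have hx₀ : 0 < x := by linarith [hx.1]
  have hdenom : 0 < x * (1 - x) * log (1 / x - 1) ^ 2 :=
    mul_pos (mul_pos hx₀ (by linarith [hx.2])) (sq_pos_of_neg hD)
  rw [(hasDerivAt_qreTX aX bX aY bY Ty hx₀.ne' hx.2.ne hD.ne).deriv]
  have hL := mul_pos hsum (qreL_pos aY bY hTy hY hx)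
  exact div_neg_of_neg_of_pos (by linarith) hdenom
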